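/- arXiv:math/9906188 — 4 statements merged into one kernel-verified Lean document; each statement's English description precedes it below -/
import Mathlib

section
/- Let A be a (not necessarily unital) associative algebra graded as A = ⊕_{k=0}^N A_k, equipped with a degree-one graded derivation d (i.e. d(ab) = (da)b + (-1)^{deg a} a(db) on homogeneous elements). Then the Fedosov product a ⋆ b := ab + (-1)^{deg a}(da)(db) is associative. -/
/-- **Associativity of the Fedosov product.**
A graded algebra with a degree-one graded derivation `d` is modeled as a
superalgebra: `ε` is the grading (parity) involution, so that on a homogeneous
element `a` one has `ε a = (-1)^(deg a) • a`.  The graded Leibniz rule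
`d (a*b) = (d a) * b + (-1)^(deg a) a * (d b)` then reads
`d (a*b) = d a * b + ε a * d b`, and the Fedosov product
`a ⋆ b = a*b + (-1)^(deg a) (d a)*(d b)` reads `a ⋆ b = a*b + d (ε a) * d b`.
Assuming `d² = 0`, the Fedosov product is associative. -/
theorem fedosov_product_assoc {A : Type*} [Ring A]
    (d : A →+ A) (ε : A →+* A)
    (hεε : ∀ a, ε (ε a) = a)
    (hLeib : ∀ a b, d (a * b) = d a * b + ε a * d b)
    (hdε : ∀ a, d (ε a) = - ε (d a))
    (hd2 : ∀ a, d (d a) = 0)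
    (star : A → A → A)
    (hstar : ∀ a b, star a b = a * b + d (ε a) * d b) :
    ∀ a b c, star (star a b) c = star a (star b c) := by
  intro a b c
  simp only [hstar, hLeib, map_add, map_mul, hdε, hεε, hd2, map_neg, map_zero,
    neg_mul, mul_neg, neg_neg, zero_mul, mul_zero, add_zero, neg_zero]
  noncomm_ring
end

section
/- In a unital ring R with ideal I, let u ∈ R/I be invertible, A a lift of u and B' a lift of u^{-1} such that AB' − 1 ∈ I and B'A − 1 ∈ I. Define the 2×2 idempotent e₁ = [[2AB' − (AB')², A(2 − B'A)(1 − B'A)],[(1 − B'A)B', (1 − B'A)²]] and e₀ = [[1,0],[0,0]]. Then e₁ is an idempotent in M₂(R), e₁ − e₀ ∈ M₂(I), and for any trace τ : I → ℂ vanishing on commutators [R, I], one has τ(e₁ − e₀) (sum of diagonal entries) = τ((1 − B'A)² − (1 − AB')²). -/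
/-- **The K-theory boundary idempotent.**
Let `I` be a two-sided ideal of a unital ring `R` (modeled as a ℂ-submodule
together with absorption hypotheses), and `A, B'` elements with
`1 - A B' ∈ I` and `1 - B' A ∈ I`.  Then the standard matrix
`e₁ = [[2AB' - (AB')², A(2 - B'A)(1 - B'A)], [(1 - B'A)B', (1 - B'A)²]]`
is an idempotent in `M₂(R)`, `e₁ - e₀ ∈ M₂(I)` (with `e₀ = diag(1,0)`),
and for any trace `τ` vanishing on `[R, I]` one has
`τ(e₁ - e₀) = τ((1 - B'A)² - (1 - AB')²)` (sum of diagonal entries). -/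
theorem boundary_idempotent {R : Type*} [Ring R] [Algebra ℂ R]
    (I : Submodule ℂ R)
    (hIl : ∀ r x : R, x ∈ I → r * x ∈ I)
    (hIr : ∀ r x : R, x ∈ I → x * r ∈ I)
    (A B' : R)
    (hAB : 1 - A * B' ∈ I) (hBA : 1 - B' * A ∈ I)
    (τ : R →ₗ[ℂ] ℂ)
    (hτ : ∀ x y : R, y ∈ I → τ (x * y - y * x) = 0)
    (e₀ e₁ : Matrix (Fin 2) (Fin 2) R)
    (he₀ : e₀ = !![1, 0; 0, 0])
    (he₁ : e₁ = !![2 * (A * B') - (A * B') ^ 2, A * (2 - B' * A) * (1 - B' * A);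
                   (1 - B' * A) * B', (1 - B' * A) ^ 2]) :
    e₁ * e₁ = e₁ ∧
    (∀ i j : Fin 2, (e₁ - e₀) i j ∈ I) ∧
    τ ((e₁ - e₀) 0 0) + τ ((e₁ - e₀) 1 1)
      = τ ((1 - B' * A) ^ 2 - (1 - A * B') ^ 2) := by
  subst he₀ he₁
  refine ⟨?_, ?_, ?_⟩
  · ext i j
    fin_cases i <;> fin_cases j <;>
      simp [Matrix.mul_apply, Fin.sum_univ_two] <;> noncomm_ring
  · intro i j
    fin_cases i <;> fin_cases j <;> simp
    · have h : 2 * (A * B') - (A * B') ^ 2 - 1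
          = -((1 - A * B') * (1 - A * B')) := by noncomm_ring
      rw [h]
      exact I.neg_mem (hIl _ _ hAB)
    · exact hIl _ _ hBA
    · exact hIr _ _ hBA
    · have h : (1 - B' * A) ^ 2 = (1 - B' * A) * (1 - B' * A) := sq _
      rw [h]; exact hIr _ _ hBA
  · simp only [Matrix.sub_apply, Matrix.cons_val', Matrix.cons_val_zero, Matrix.cons_val_one,
      Matrix.head_cons, Matrix.empty_val', Matrix.cons_val_fin_one, Matrix.head_fin_const,
      Matrix.of_apply]
    rw [← map_add]
    congr 1
    noncomm_ring
end

section
/- Let R be a unital ring, I an ideal, A, B' ∈ R with 1 − AB' ∈ I and 1 − B'A ∈ I, and let τ : I → ℂ be linear with τ([R, I]) = 0. Then τ((1 − B'A)² − (1 − AB')²) = τ(AB' − B'A). (Note AB' − B'A ∈ I since both 1 − AB' and 1 − B'A lie in I.) -/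
/-- Let `I` be a two-sided ideal of a unital ring `R`, `A, B' ∈ R` with
`1 - AB' ∈ I` and `1 - B'A ∈ I`, and `τ` a linear functional on `R` vanishing
on commutators `[R, I]`.  Then
`τ((1 - B'A)² - (1 - AB')²) = τ(AB' - B'A)`. -/
theorem trace_of_index_idempotent {R : Type*} [Ring R] [Algebra ℂ R]
    (I : Submodule ℂ R)
    (hIl : ∀ r x : R, x ∈ I → r * x ∈ I)
    (hIr : ∀ r x : R, x ∈ I → x * r ∈ I)
    (A B' : R)
    (hAB : 1 - A * B' ∈ I) (hBA : 1 - B' * A ∈ I)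
    (τ : R →ₗ[ℂ] ℂ)
    (hτ : ∀ x y : R, y ∈ I → τ (x * y - y * x) = 0) :
    τ ((1 - B' * A) ^ 2 - (1 - A * B') ^ 2) = τ (A * B' - B' * A) := by
  have key := hτ A (B' * (1 - A * B')) (hIl B' _ hAB)
  have h : (1 - B' * A) ^ 2 - (1 - A * B') ^ 2 =
      (A * B' - B' * A) + (A * (B' * (1 - A * B')) - (B' * (1 - A * B')) * A) := by
    noncomm_ring
  rw [h, map_add, key, add_zero]
end

section
/- With Ā, Θ as above, define τ̄(a₀₀ + a₀₁X + Xa₁₀ + Xa₁₁X) := τ(a₀₀) − (−1)^{deg a₁₁} τ(Θ a₁₁), where τ is a graded trace on A vanishing outside one fixed degree. If additionally τ(∇(a)) = 0 for all a and τ([Θ, a]) = 0, then τ̄ is a closed graded trace on (Ā, d̄): τ̄(d̄(ξ)) = 0 for all ξ ∈ Ā, and τ̄(ξη − (−1)^{deg ξ deg η} ηξ) = 0. -/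
/-- **The perturbed trace `τ̄` is a closed graded trace on `(Ā, d̄)`.**
Setting: a graded algebra `A` (with homogeneity predicate `mem`), grading
involution `ε` (`ε a = (-1)^i • a` for `a` of degree `i`), degree-one
derivation `nabla` with `nabla² = [Θ, ·]` for an even curvature `Θ ∈ A₂`,
`nabla Θ = 0`; `τ` a graded trace supported in a single degree `p₀` with
`τ ∘ nabla = 0` and `τ([Θ, A]) = 0`.  The enlarged algebra
`Ā = A ⊕ AX ⊕ XA ⊕ XAX` is represented by quadruples
`(p,q,r,s) ↔ p + qX + Xr + XsX` with the relations `aXb = 0`,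
`(aX)(Xb) = aΘb`; its product, the differential `d̄` and the functional
`τ̄(p + qX + Xr + XsX) = τ(p) - (-1)^(deg s) τ(Θ s) = τ(p) - τ(Θ · ε s)`
are given in components below.  Then `τ̄` is closed (`τ̄ ∘ d̄ = 0`) and is a
graded trace: `τ̄(ξη - (-1)^(mn) ηξ) = 0` for `ξ, η` homogeneous of degrees
`m, n`. -/
theorem connes_X_trick_closed_graded_trace {A : Type*} [Ring A] [Algebra ℂ A]
    (mem : ℤ → A → Prop)
    (hmem_mul : ∀ i j a b, mem i a → mem j b → mem (i + j) (a * b))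
    (hdecomp : ∀ a : A, a ∈ Submodule.span ℂ {x : A | ∃ i : ℤ, mem i x})
    (nabla : A →ₗ[ℂ] A) (ε : A →ₗ[ℂ] A) (Θ : A) (p₀ : ℤ)
    (τ : A →ₗ[ℂ] ℂ)
    (hΘ : mem 2 Θ)
    (hnabla_deg : ∀ i a, mem i a → mem (i + 1) (nabla a))
    (hεdef : ∀ i a, mem i a → ε a = ((-1 : ℂ) ^ i) • a)
    (hεε : ∀ a, ε (ε a) = a)
    (hLeib : ∀ a b, nabla (a * b) = nabla a * b + ε a * nabla b)
    (hanti : ∀ a, nabla (ε a) = - ε (nabla a))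
    (hcurv : ∀ a, nabla (nabla a) = Θ * a - a * Θ)
    (hBianchi : nabla Θ = 0)
    (htrace : ∀ i j a b, mem i a → mem j b →
      τ (a * b) = ((-1 : ℂ) ^ (i * j)) * τ (b * a))
    (hsupp : ∀ k a, mem k a → k ≠ p₀ → τ a = 0)
    (hclosed : ∀ a, τ (nabla a) = 0)
    (hΘtr : ∀ a, τ (Θ * a - a * Θ) = 0)
    (Dbar : A × A × A × A → A × A × A × A)
    (hDbar : ∀ p q r s : A,
      Dbar (p, q, r, s) =
        (nabla p + ε q * Θ - Θ * r, ε p + nabla q - Θ * s,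
         p - nabla r - ε s * Θ, q - ε r - nabla s))
    (mulBar : A × A × A × A → A × A × A × A → A × A × A × A)
    (hmulBar : ∀ p q r s p' q' r' s' : A,
      mulBar (p, q, r, s) (p', q', r', s') =
        (p * p' + q * Θ * r', p * q' + q * Θ * s',
         r * p' + s * Θ * r', r * q' + s * Θ * s'))
    (τbar : A × A × A × A →ₗ[ℂ] ℂ)
    (hτbar : ∀ p q r s : A, τbar (p, q, r, s) = τ p - τ (Θ * ε s))
    (memBar : ℤ → A × A × A × A → Prop)
    (hmemBar : ∀ (n : ℤ) (p q r s : A),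
      memBar n (p, q, r, s) ↔ mem n p ∧ mem (n - 1) q ∧ mem (n - 1) r ∧ mem (n - 2) s) :
    (∀ ξ : A × A × A × A, τbar (Dbar ξ) = 0) ∧
    (∀ (m n : ℤ) (ξ η : A × A × A × A), memBar m ξ → memBar n η →
      τbar (mulBar ξ η - ((-1 : ℂ) ^ (m * n)) • mulBar η ξ) = 0) := by

  -- basic consequences
  have hΘcomm : ∀ a : A, τ (Θ * a) = τ (a * Θ) := by
    intro a
    have h := hΘtr a
    rw [map_sub] at h
    exact sub_eq_zero.mp h
  have hεΘ : ε Θ = Θ := by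
    rw [hεdef 2 Θ hΘ]
    norm_num
  have hpw : ∀ a b k : ℤ, a = b + 2 * k → ((-1 : ℂ)) ^ a = (-1 : ℂ) ^ b := by
    intro a b k hk
    rw [hk, zpow_add₀ (by norm_num : (-1 : ℂ) ≠ 0), zpow_mul]
    norm_num
  have hmem' : ∀ (i j : ℤ) (a : A), i = j → mem i a → mem j a := by
    intro i j a h ha; rwa [h] at ha
  constructor
  · -- closedness
    rintro ⟨p, q, r, s⟩
    rw [hDbar, hτbar]
    have key : τ (Θ * ε (nabla s)) = 0 := by
      have h1 : ε (nabla s) = - nabla (ε s) := by rw [hanti s, neg_neg]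
      have h2 : nabla (Θ * ε s) = Θ * nabla (ε s) := by
        rw [hLeib, hBianchi, hεΘ, zero_mul, zero_add]
      rw [h1, mul_neg, map_neg, ← h2, hclosed, neg_zero]
    rw [map_sub, map_add, map_sub, map_sub, mul_sub, mul_sub, map_sub, map_sub]
    rw [hclosed p, hεε r, key, hΘcomm (ε q)]
    ring
  · -- graded trace property
    rintro m n ⟨p, q, r, s⟩ ⟨p', q', r', s'⟩ hξ hη
    obtain ⟨hp, hq, hr, hs⟩ := (hmemBar m p q r s).mp hξ
    obtain ⟨hp', hq', hr', hs'⟩ := (hmemBar n p' q' r' s').mp hη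
    -- memberships
    have hΘr' : mem (n + 1) (Θ * r') :=
      hmem' _ _ _ (by ring) (hmem_mul 2 (n - 1) Θ r' hΘ hr')
    have hΘr : mem (m + 1) (Θ * r) :=
      hmem' _ _ _ (by ring) (hmem_mul 2 (m - 1) Θ r hΘ hr)
    have hΘs' : mem n (Θ * s') :=
      hmem' _ _ _ (by ring) (hmem_mul 2 (n - 2) Θ s' hΘ hs')
    have hΘs : mem m (Θ * s) :=
      hmem' _ _ _ (by ring) (hmem_mul 2 (m - 2) Θ s hΘ hs)
    have hrq' : mem (m + n - 2) (r * q') :=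
      hmem' _ _ _ (by ring) (hmem_mul (m - 1) (n - 1) r q' hr hq')
    have hr'q : mem (m + n - 2) (r' * q) :=
      hmem' _ _ _ (by ring) (hmem_mul (n - 1) (m - 1) r' q hr' hq)
    have hsΘs' : mem (m + n - 2) (s * (Θ * s')) :=
      hmem' _ _ _ (by ring) (hmem_mul (m - 2) n s (Θ * s') hs hΘs')
    have hs'Θs : mem (m + n - 2) (s' * (Θ * s)) :=
      hmem' _ _ _ (by ring) (hmem_mul (n - 2) m s' (Θ * s) hs' hΘs)
    have hΘsΘ : mem (m + 2) (Θ * (s * Θ)) :=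
      hmem' _ _ _ (by ring)
        (hmem_mul 2 m Θ (s * Θ) hΘ (hmem' _ _ _ (by ring) (hmem_mul (m - 2) 2 s Θ hs hΘ)))
    -- sign normalizations
    have hσ : ((-1 : ℂ)) ^ (m + n - 2) = (-1 : ℂ) ^ (m + n) :=
      hpw _ _ (-1) (by ring)
    have hs2 : ((-1 : ℂ)) ^ ((m - 1) * (n + 1)) =
        -((-1 : ℂ) ^ (m * n) * (-1 : ℂ) ^ (m + n)) := by
      rw [hpw _ (m * n + (m + n) + 1) (-(n + 1)) (by ring),
        zpow_add₀ (by norm_num : (-1 : ℂ) ≠ 0),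
        zpow_add₀ (by norm_num : (-1 : ℂ) ≠ 0), zpow_one]
      ring
    have hs3 : ((-1 : ℂ)) ^ ((n - 1) * (m + 1)) =
        -((-1 : ℂ) ^ (m * n) * (-1 : ℂ) ^ (m + n)) := by
      rw [hpw _ (m * n + (m + n) + 1) (-(m + 1)) (by ring),
        zpow_add₀ (by norm_num : (-1 : ℂ) ≠ 0),
        zpow_add₀ (by norm_num : (-1 : ℂ) ≠ 0), zpow_one]
      ring
    have hs4 : ((-1 : ℂ)) ^ ((m + 2) * (n - 2)) = (-1 : ℂ) ^ (m * n) :=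
      hpw _ _ (n - m - 2) (by ring)
    have hc2 : ((-1 : ℂ)) ^ (m * n) * (-1 : ℂ) ^ (m * n) = 1 := by
      rw [← zpow_add₀ (by norm_num : (-1 : ℂ) ≠ 0), hpw (m * n + m * n) 0 (m * n) (by ring),
        zpow_zero]
    -- trace identities
    have h1 : τ (p * p') = (-1 : ℂ) ^ (m * n) * τ (p' * p) := htrace m n p p' hp hp'
    have h2 : τ (q * (Θ * r')) =
        -((-1 : ℂ) ^ (m * n) * (-1 : ℂ) ^ (m + n)) * τ (Θ * (r' * q)) := by
      have h := htrace (m - 1) (n + 1) q (Θ * r') hq hΘr'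
      rw [hs2] at h
      rw [h, mul_assoc]
    have h3 : τ (q' * (Θ * r)) =
        -((-1 : ℂ) ^ (m * n) * (-1 : ℂ) ^ (m + n)) * τ (Θ * (r * q')) := by
      have h := htrace (n - 1) (m + 1) q' (Θ * r) hq' hΘr
      rw [hs3] at h
      rw [h, mul_assoc]
    have h4 : τ (Θ * (s * (Θ * s'))) = (-1 : ℂ) ^ (m * n) * τ (s' * (Θ * (s * Θ))) := by
      have h := htrace (m + 2) (n - 2) (Θ * (s * Θ)) s' hΘsΘ hs'
      rw [hs4] at h
      rw [← h]
      congr 1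
      simp only [mul_assoc]
    have hb4 : τ (Θ * (s' * (Θ * s))) = τ (s' * (Θ * (s * Θ))) := by
      rw [hΘcomm (s' * (Θ * s))]
      congr 1
      simp only [mul_assoc]
    -- expand the goal
    rw [map_sub, map_smul, hmulBar, hmulBar, hτbar, hτbar]
    simp only [map_add, mul_add, smul_eq_mul, mul_assoc]
    rw [hεdef _ _ hrq', hεdef _ _ hsΘs', hεdef _ _ hr'q, hεdef _ _ hs'Θs]
    simp only [mul_smul_comm, map_smul, smul_eq_mul, hσ]
    linear_combination h1 + h2 - ((-1 : ℂ) ^ (m * n)) * h3 -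
      ((-1 : ℂ) ^ (m + n)) * h4 + ((-1 : ℂ) ^ (m * n)) * ((-1 : ℂ) ^ (m + n)) * hb4 +
      ((-1 : ℂ) ^ (m + n)) * τ (Θ * (r * q')) * hc2
end
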